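/- arXiv:1503.06426 — 3 statements merged into one kernel-verified Lean document; each statement's English description precedes it below -/
import Mathlib

section
/- Let Σ be a p×p positive definite matrix, Γ ∈ ℝ^p, β⁰ = Σ⁻¹Γ, and let s_ℓ = #{k ≠ ℓ : (Σ⁻¹)_{kℓ} ≠ 0}. For any 0 < r ≤ 1, ‖β⁰‖_r^r ≤ (max_ℓ s_ℓ + 1) · ‖Σ⁻¹‖_∞^r · ‖Γ‖_r^r, where ‖Σ⁻¹‖_∞ = max_{jk} |(Σ⁻¹)_{jk}|. -/
/-! Since `t ↦ t ^ r` is subadditive on `[0, ∞)` for `0 < r ≤ 1`,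
`|β_j|^r ≤ ∑_ℓ |(Σ⁻¹)_{jℓ}|^r |Γ_ℓ|^r`. Summing over `j` and exchanging the sums, the weight of
`|Γ_ℓ|^r` is the `r`-mass of column `ℓ` of `Σ⁻¹`, which has at most `s_ℓ + 1` nonzero entries
(the off-diagonal ones and the diagonal one), each at most `‖Σ⁻¹‖_∞` in absolute value. -/

open Finset

theorem Real.rpow_sum_le_sum_rpow {ι : Type*} (s : Finset ι) {f : ι → ℝ}
    (hf : ∀ i ∈ s, 0 ≤ f i) {r : ℝ} (hr0 : 0 < r) (hr1 : r ≤ 1) :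
    (∑ i ∈ s, f i) ^ r ≤ ∑ i ∈ s, f i ^ r :=
  le_sum_of_subadditive_on_pred (· ^ r) (0 ≤ ·) (Real.zero_rpow hr0.ne').le
    (fun _ _ hx hy => Real.rpow_add_le_add_rpow hx hy hr0.le hr1) (fun _ _ => add_nonneg) f hf

theorem Finset.card_filter_le_card_filter_ne_add_one {α : Type*} [DecidableEq α] (s : Finset α)
    (p : α → Prop) [DecidablePred p] (a : α) :
    #{x ∈ s | p x} ≤ #{x ∈ s | x ≠ a ∧ p x} + 1 := by
  have hsub : {x ∈ s | p x} ⊆ insert a {x ∈ s | x ≠ a ∧ p x} := by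
    intro x hx
    rw [mem_filter] at hx
    rw [mem_insert, mem_filter]
    tauto
  exact (card_le_card hsub).trans (card_insert_le _ _)

theorem Finset.sum_abs_rpow_le_card_filter_ne_zero_mul {ι : Type*} [Fintype ι] {f : ι → ℝ}
    {M r : ℝ} (hr : 0 < r) (hf : ∀ i, |f i| ≤ M) :
    ∑ i, |f i| ^ r ≤ #{i | f i ≠ 0} * M ^ r := by
  have hsupp : ∑ i with f i ≠ 0, |f i| ^ r = ∑ i, |f i| ^ r :=
    sum_filter_of_ne fun i _ hi hfi => hi (by rw [hfi, abs_zero, Real.zero_rpow hr.ne'])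
  rw [← hsupp, ← nsmul_eq_mul]
  exact sum_le_card_nsmul _ _ _ fun i _ => Real.rpow_le_rpow (abs_nonneg _) (hf i) hr.le

namespace Matrix

variable {m n : Type*} [Fintype n] {r : ℝ}

theorem abs_mulVec_rpow_le (hr0 : 0 < r) (hr1 : r ≤ 1) (A : Matrix m n ℝ) (v : n → ℝ) (i : m) :
    |(A *ᵥ v) i| ^ r ≤ ∑ j, |A i j| ^ r * |v j| ^ r :=
  calc |(A *ᵥ v) i| ^ r ≤ (∑ j, |A i j * v j|) ^ r :=
        Real.rpow_le_rpow (abs_nonneg _) (abs_sum_le_sum_abs _ _) hr0.le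
    _ ≤ ∑ j, |A i j * v j| ^ r :=
        Real.rpow_sum_le_sum_rpow _ (fun _ _ => abs_nonneg _) hr0 hr1
    _ = ∑ j, |A i j| ^ r * |v j| ^ r := by
        simp only [abs_mul, Real.mul_rpow (abs_nonneg _) (abs_nonneg _)]

theorem sum_abs_mulVec_rpow_le [Fintype m] (hr0 : 0 < r) (hr1 : r ≤ 1) (A : Matrix m n ℝ) (v : n → ℝ) :
    ∑ i, |(A *ᵥ v) i| ^ r ≤ ∑ j, (∑ i, |A i j| ^ r) * |v j| ^ r :=
  calc ∑ i, |(A *ᵥ v) i| ^ r ≤ ∑ i, ∑ j, |A i j| ^ r * |v j| ^ r :=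
        sum_le_sum fun i _ => abs_mulVec_rpow_le hr0 hr1 A v i
    _ = ∑ j, (∑ i, |A i j| ^ r) * |v j| ^ r := by
        rw [sum_comm]
        simp only [sum_mul]

theorem sum_abs_col_rpow_le [DecidableEq n] (hr : 0 < r) {A : Matrix n n ℝ} {M : ℝ}
    (hM : ∀ i j, |A i j| ≤ M) (j : n) :
    ∑ i, |A i j| ^ r ≤ (#{i | i ≠ j ∧ A i j ≠ 0} + 1) * M ^ r := by
  have hM0 : 0 ≤ M ^ r := Real.rpow_nonneg ((abs_nonneg _).trans (hM j j)) r
  calc ∑ i, |A i j| ^ r ≤ #{i | A i j ≠ 0} * M ^ r :=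
        sum_abs_rpow_le_card_filter_ne_zero_mul hr (hM · j)
    _ ≤ (#{i | i ≠ j ∧ A i j ≠ 0} + 1) * M ^ r := by
        gcongr
        exact_mod_cast card_filter_le_card_filter_ne_add_one _ _ j

end Matrix

theorem lr_sparsity_bound_via_column_sparsity_general (p : ℕ)
    (S : Matrix (Fin p) (Fin p) ℝ)
    (Γ : Fin p → ℝ) (β : Fin p → ℝ) (hβ : β = S⁻¹.mulVec Γ)
    (s : Fin p → ℕ)
    (hs : ∀ ℓ, s ℓ = (Finset.univ.filter (fun k => k ≠ ℓ ∧ S⁻¹ k ℓ ≠ 0)).card)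
    (r : ℝ) (hr0 : 0 < r) (hr1 : r ≤ 1) :
    ∑ j, |β j| ^ r ≤
      ((⨆ ℓ, (s ℓ : ℝ)) + 1) * (⨆ j, ⨆ k, |S⁻¹ j k|) ^ r * ∑ ℓ, |Γ ℓ| ^ r := by
  set M := ⨆ j, ⨆ k, |S⁻¹ j k|
  have hM : ∀ j k, |S⁻¹ j k| ≤ M := fun j k =>
    Finite.le_ciSup_of_le j (Finite.le_ciSup_of_le k le_rfl)
  have hcol : ∀ ℓ, ∑ j, |S⁻¹ j ℓ| ^ r ≤ ((⨆ ℓ, (s ℓ : ℝ)) + 1) * M ^ r := fun ℓ =>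
    calc ∑ j, |S⁻¹ j ℓ| ^ r ≤ (s ℓ + 1) * M ^ r := by
          simpa only [hs] using Matrix.sum_abs_col_rpow_le hr0 hM ℓ
      _ ≤ ((⨆ ℓ, (s ℓ : ℝ)) + 1) * M ^ r := by
          have hM0 : 0 ≤ M := (abs_nonneg _).trans (hM ℓ ℓ)
          gcongr
          exact Finite.le_ciSup_of_le ℓ le_rfl
  subst hβ
  calc ∑ j, |S⁻¹.mulVec Γ j| ^ r ≤ ∑ ℓ, (∑ j, |S⁻¹ j ℓ| ^ r) * |Γ ℓ| ^ r :=
        Matrix.sum_abs_mulVec_rpow_le hr0 hr1 _ _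
    _ ≤ ∑ ℓ, ((⨆ ℓ, (s ℓ : ℝ)) + 1) * M ^ r * |Γ ℓ| ^ r := by
        gcongr with ℓ
        exact hcol ℓ
    _ = ((⨆ ℓ, (s ℓ : ℝ)) + 1) * M ^ r * ∑ ℓ, |Γ ℓ| ^ r := by rw [mul_sum]

/-- ℓ_r-sparsity bound in terms of the column sparsities `s_ℓ` of `Σ⁻¹` and
`‖Σ⁻¹‖_∞ = max_{jk} |(Σ⁻¹)_{jk}|`:
`‖β⁰‖_r^r ≤ (max_ℓ s_ℓ + 1) ‖Σ⁻¹‖_∞^r ‖Γ‖_r^r` for `0 < r ≤ 1`. -/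
theorem lr_sparsity_bound_via_column_sparsity (p : ℕ)
    (S : Matrix (Fin p) (Fin p) ℝ) (hS : S.PosDef)
    (Γ : Fin p → ℝ) (β : Fin p → ℝ) (hβ : β = S⁻¹.mulVec Γ)
    (s : Fin p → ℕ)
    (hs : ∀ ℓ, s ℓ = (Finset.univ.filter (fun k => k ≠ ℓ ∧ S⁻¹ k ℓ ≠ 0)).card)
    (r : ℝ) (hr0 : 0 < r) (hr1 : r ≤ 1) :
    ∑ j, |β j| ^ r ≤
      ((⨆ ℓ, (s ℓ : ℝ)) + 1) * (⨆ j, ⨆ k, |S⁻¹ j k|) ^ r * ∑ ℓ, |Γ ℓ| ^ r :=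
  lr_sparsity_bound_via_column_sparsity_general p S Γ β hβ s hs r hr0 hr1
end

section
/- Let Σ be a p×p positive definite block-diagonal matrix with maximal block size b_max, let X be a mean-zero random vector with covariance Σ, where variables in different blocks are jointly independent, and let f⁰(X) = g(X_{S}) depend only on variables in a set S of cardinality |S|. Let Γ_ℓ = Cov(f⁰(X), X_ℓ). Then ‖Γ‖₀ ≤ b_max · |S|, and consequently for β⁰ = Σ⁻¹Γ, ‖β⁰‖₀ ≤ b_max² · |S|. -/
/-!
Independence of distinct blocks makes `f⁰(X)` independent of every `X_ℓ` whose block misses the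
blocks met by `S`, so `Γ` is supported on the union `U` of at most `|S|` blocks, a set of at most
`b_max |S|` coordinates. Independence also makes `Σ` block diagonal, hence so is `Σ⁻¹`, and
`β⁰ = Σ⁻¹ Γ` is supported on `U` as well.
-/

open MeasureTheory ProbabilityTheory Finset

namespace Matrix

variable {n α R : Type*} [Fintype n] [CommRing R]

def IsBlockDiagonal (M : Matrix n n R) (b : n → α) : Prop :=
  ∀ ⦃i j⦄, b i ≠ b j → M i j = 0

/-- Block diagonal means block triangular for any linear order on the blocks and for its dual. -/
theorem IsBlockDiagonal.inv [DecidableEq n] {M : Matrix n n R} {b : n → α}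
    (hM : M.IsBlockDiagonal b) : M⁻¹.IsBlockDiagonal b := by
  intro i j hij
  by_cases hdet : IsUnit M.det
  · let : LinearOrder α := IsWellOrder.linearOrder WellOrderingRel
    let := invertibleOfIsUnitDet M hdet
    have hlow : M⁻¹.BlockTriangular b :=
      blockTriangular_inv_of_blockTriangular fun _ _ h => hM h.ne'
    have hup : M⁻¹.BlockTriangular (OrderDual.toDual ∘ b) :=
      blockTriangular_inv_of_blockTriangular fun _ _ h => hM h.ne'
    rcases hij.lt_or_gt with h | h
    · exact hup h
    · exact hlow h
  · rw [nonsing_inv_apply_not_isUnit M hdet, zero_apply]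

theorem IsBlockDiagonal.mulVec_apply_eq_zero {M : Matrix n n R} {b : n → α}
    (hM : M.IsBlockDiagonal b) {v : n → R} {i : n} (hv : ∀ k, b k = b i → v k = 0) :
    (M *ᵥ v) i = 0 := by
  refine Finset.sum_eq_zero fun k _ => ?_
  dsimp only
  by_cases hk : b k = b i
  · rw [hv k hk, mul_zero]
  · rw [hM (Ne.symm hk), zero_mul]

end Matrix

theorem card_filter_ne_zero_le_of_blocks {ι κ M : Type*} [Fintype ι] [DecidableEq κ] [Zero M]
    [DecidableEq M] {P : ι → κ} {b : ℕ} (hblock : ∀ i, #{j | P j = i} ≤ b) {S : Finset ι}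
    {v : ι → M} (hv : ∀ ℓ, P ℓ ∉ S.image P → v ℓ = 0) : #{ℓ | v ℓ ≠ 0} ≤ b * #S := by
  have hmaps : ∀ ℓ ∈ ({ℓ | v ℓ ≠ 0} : Finset ι), P ℓ ∈ S.image P := fun ℓ hℓ =>
    by_contra fun h => (mem_filter.1 hℓ).2 (hv ℓ h)
  calc #{ℓ | v ℓ ≠ 0}
      ≤ b * #(S.image P) := card_le_mul_card_image_of_maps_to hmaps b fun i _ =>
        (card_le_card (filter_subset_filter _ (subset_univ _))).trans (hblock i)
    _ ≤ b * #S := Nat.mul_le_mul_left b card_image_le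

theorem indepFun_restrict_of_disjoint_image {Ω ι κ : Type*} [MeasurableSpace Ω]
    {μ : Measure Ω} [DecidableEq κ] {P : ι → κ} {X : ι → Ω → ℝ} (hX : ∀ j, Measurable (X j))
    (hindep : iIndepFun (fun i ω => fun j : {j // P j = i} => X j.1 ω) μ)
    {S T : Finset ι} (hST : Disjoint (S.image P) (T.image P)) :
    IndepFun (fun ω (j : S) => X j ω) (fun ω (j : T) => X j ω) μ := by
  have h := hindep.indepFun_finset (S.image P) (T.image P) hST
    fun i => measurable_pi_lambda _ fun j => hX j.1
  exact h.comp (φ := fun y (j : S) => y ⟨P j, mem_image_of_mem P j.2⟩ ⟨j, rfl⟩)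
    (ψ := fun y (j : T) => y ⟨P j, mem_image_of_mem P j.2⟩ ⟨j, rfl⟩)
    (measurable_pi_lambda _ fun j => (measurable_pi_apply _).comp (measurable_pi_apply _))
    (measurable_pi_lambda _ fun j => (measurable_pi_apply _).comp (measurable_pi_apply _))

theorem block_dependence_sparsity_general
    {Ω : Type*} [MeasurableSpace Ω] (μ : Measure Ω)
    (p m bmax : ℕ) (X : Fin p → Ω → ℝ) (hXmeas : ∀ j, Measurable (X j))
    (hXmean : ∀ j, ∫ ω, X j ω ∂μ = 0)
    -- partition into blocks of size at most `bmax`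
    (P : Fin p → Fin m)
    (hblock : ∀ i : Fin m, (Finset.univ.filter (fun j => P j = i)).card ≤ bmax)
    -- variables in distinct blocks are jointly independent
    (hindep : iIndepFun
      (fun i ω => fun j : {j : Fin p // P j = i} => X j.1 ω) μ)
    (S0 : Matrix (Fin p) (Fin p) ℝ)
    (hS0 : ∀ j k, S0 j k = ∫ ω, X j ω * X k ω ∂μ)
    (S : Finset (Fin p)) (g : ({j : Fin p // j ∈ S} → ℝ) → ℝ)
    (hg : Measurable g)
    (f : Ω → ℝ) (hf : ∀ ω, f ω = g (fun j => X j.1 ω))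
    (Γ : Fin p → ℝ)
    (hΓ : ∀ ℓ, Γ ℓ = ∫ ω, f ω * X ℓ ω ∂μ - (∫ ω, f ω ∂μ) * ∫ ω, X ℓ ω ∂μ)
    (β : Fin p → ℝ) (hβ : β = S0⁻¹.mulVec Γ) :
    (Finset.univ.filter (fun ℓ => Γ ℓ ≠ 0)).card ≤ bmax * S.card ∧
    (Finset.univ.filter (fun j => β j ≠ 0)).card ≤ bmax ^ 2 * S.card := by
  have hf_meas : Measurable f := by
    rw [funext hf]
    exact hg.comp (measurable_pi_lambda _ fun j => hXmeas j.1)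
  have hΓ_zero : ∀ ℓ, P ℓ ∉ S.image P → Γ ℓ = 0 := by
    intro ℓ hℓ
    have hindep_ℓ : IndepFun f (X ℓ) μ := by
      have h := indepFun_restrict_of_disjoint_image hXmeas hindep (T := {ℓ})
        (by simpa using hℓ)
      rw [funext hf]
      exact h.comp hg (measurable_pi_apply ⟨ℓ, mem_singleton_self ℓ⟩)
    rw [hΓ, hindep_ℓ.integral_fun_mul_eq_mul_integral hf_meas.aestronglyMeasurable
      (hXmeas ℓ).aestronglyMeasurable, sub_self]
  have hS0_block : S0.IsBlockDiagonal P := by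
    intro j k hjk
    have hindep_jk : IndepFun (X j) (X k) μ := by
      have h := indepFun_restrict_of_disjoint_image hXmeas hindep (S := {j}) (T := {k})
        (by simpa using hjk)
      exact h.comp (measurable_pi_apply ⟨j, mem_singleton_self j⟩)
        (measurable_pi_apply ⟨k, mem_singleton_self k⟩)
    rw [hS0, hindep_jk.integral_fun_mul_eq_mul_integral (hXmeas j).aestronglyMeasurable
      (hXmeas k).aestronglyMeasurable, hXmean j, zero_mul]
  have hβ_zero : ∀ j, P j ∉ S.image P → β j = 0 := fun j hj =>
    hβ ▸ hS0_block.inv.mulVec_apply_eq_zero fun k hk => hΓ_zero k (hk ▸ hj)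
  exact ⟨card_filter_ne_zero_le_of_blocks hblock hΓ_zero,
    (card_filter_ne_zero_le_of_blocks hblock hβ_zero).trans
      (Nat.mul_le_mul_right _ (Nat.le_self_pow two_ne_zero bmax))⟩

/-- Block dependence: if the covariance `Σ` is block diagonal with maximal
block size `b_max` (blocks given by a partition `P`, variables in distinct
blocks jointly independent) and `f⁰(X) = g(X_S)`, then
`‖Γ‖₀ ≤ b_max |S|` and `‖β⁰‖₀ ≤ b_max² |S|` for `β⁰ = Σ⁻¹ Γ`. -/
theorem block_dependence_sparsity
    {Ω : Type*} [MeasurableSpace Ω] (μ : Measure Ω) [IsProbabilityMeasure μ]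
    (p m bmax : ℕ) (X : Fin p → Ω → ℝ) (hXmeas : ∀ j, Measurable (X j))
    (hX2 : ∀ j, MemLp (X j) 2 μ) (hXmean : ∀ j, ∫ ω, X j ω ∂μ = 0)
    -- partition into blocks of size at most `bmax`
    (P : Fin p → Fin m)
    (hblock : ∀ i : Fin m, (Finset.univ.filter (fun j => P j = i)).card ≤ bmax)
    -- variables in distinct blocks are jointly independent
    (hindep : iIndepFun
      (fun i ω => fun j : {j : Fin p // P j = i} => X j.1 ω) μ)
    (S0 : Matrix (Fin p) (Fin p) ℝ)
    (hS0 : ∀ j k, S0 j k = ∫ ω, X j ω * X k ω ∂μ) (hSpd : S0.PosDef)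
    (S : Finset (Fin p)) (g : ({j : Fin p // j ∈ S} → ℝ) → ℝ)
    (hg : Measurable g)
    (f : Ω → ℝ) (hf : ∀ ω, f ω = g (fun j => X j.1 ω)) (hf2 : MemLp f 2 μ)
    (Γ : Fin p → ℝ)
    (hΓ : ∀ ℓ, Γ ℓ = ∫ ω, f ω * X ℓ ω ∂μ - (∫ ω, f ω ∂μ) * ∫ ω, X ℓ ω ∂μ)
    (β : Fin p → ℝ) (hβ : β = S0⁻¹.mulVec Γ) :
    (Finset.univ.filter (fun ℓ => Γ ℓ ≠ 0)).card ≤ bmax * S.card ∧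
    (Finset.univ.filter (fun j => β j ≠ 0)).card ≤ bmax ^ 2 * S.card :=
  block_dependence_sparsity_general μ p m bmax X hXmeas hXmean P hblock hindep S0 hS0 S g hg f hf Γ
    hΓ β hβ
end

section
/- Let ε₁,…,εₙ be i.i.d. real random variables with E[εᵢ Xᵢⱼ] = 0 for each j, where X is an n×p random matrix with i.i.d. rows satisfying max_j ‖X_{•j}‖_∞ ≤ C₂ almost surely, and E|εᵢ|² ≤ C₆ < ∞. Then E[max_{1≤j≤p} |n⁻¹ Σᵢ εᵢ Xᵢⱼ|²] ≤ 8 log(2p) C₂² C₆ / n. -/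
/-!
For `m ≥ 1` the squared norm `F v = ‖v‖_{2m}²` on `ℝ^p` is `(2m - 1)`-smooth:
`F (x + z) ≤ F x + ⟪∇F x, z⟫ + (2m - 1) F z`. Along the line `t ↦ x + t z` this is a
second-order Taylor bound: Hölder's inequality controls the second derivative of
`t ↦ ‖x + t z‖_{2m}^{2m}`, and `u ↦ u ^ (1/m)` is concave. (The gradient is singular where the line
meets `0`, so one works with `(δ + ‖·‖_{2m}^{2m}) ^ (1/m)` and lets `δ → 0`.)
Adding the independent centred summands `εᵢ Xᵢ•` one at a time, the gradient term has mean zero,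
whence `E F (∑ᵢ εᵢ Xᵢ•) ≤ (2m - 1) ∑ᵢ E F (εᵢ Xᵢ•) ≤ (2m - 1) n p^(1/m) C₂² C₆`.
Finally `max_j vⱼ² ≤ F v`, and `m = ⌈log 2p⌉` gives `(2m - 1) p^(1/m) ≤ 8 log 2p`.
-/

open MeasureTheory ProbabilityTheory Finset Filter Topology

theorem le_add_deriv_mul_add_of_deriv2_le {f f' f'' : ℝ → ℝ} {K x y : ℝ}
    (hf : ∀ t, HasDerivAt f (f' t) t) (hf' : ∀ t, HasDerivAt f' (f'' t) t)
    (hK : ∀ t, f'' t ≤ K) (hxy : x < y) :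
    f y ≤ f x + f' x * (y - x) + K / 2 * (y - x) ^ 2 := by
  set g : ℝ → ℝ := fun t => K / 2 * (t - x) ^ 2 - f t
  have hg : ∀ t, HasDerivAt g (K * (t - x) - f' t) t := fun t => by
    have hsq : HasDerivAt (fun t => (t - x) ^ 2) (2 * (t - x)) t := by
      simpa using ((hasDerivAt_id' t).sub_const x).fun_pow 2
    exact ((hsq.const_mul (K / 2)).fun_sub (hf t)).congr_deriv (by ring)
  have hg' : ∀ t, HasDerivAt (fun t => K * (t - x) - f' t) (K - f'' t) t := fun t => by
    simpa using (((hasDerivAt_id t).sub_const x).const_mul K).fun_sub (hf' t)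
  have hconv : ConvexOn ℝ Set.univ g :=
    convexOn_of_hasDerivWithinAt2_nonneg convex_univ
      (fun t _ => (hg t).continuousAt.continuousWithinAt) (fun t _ => (hg t).hasDerivWithinAt)
      (fun t _ => (hg' t).hasDerivWithinAt) (fun t _ => sub_nonneg.2 (hK t))
  have := hconv.le_slope_of_hasDerivAt (Set.mem_univ x) (Set.mem_univ y) hxy (hg x)
  rw [slope_def_field, le_div_iff₀ (sub_pos.2 hxy)] at this
  simp only [g, sub_self] at this
  nlinarith

theorem rpow_le_add_of_deriv2_le_rpow {g g' g'' : ℝ → ℝ} {c A : ℝ} (hc0 : 0 ≤ c) (hc1 : c ≤ 1)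
    (hpos : ∀ t, 0 < g t) (hg : ∀ t, HasDerivAt g (g' t) t) (hg' : ∀ t, HasDerivAt g' (g'' t) t)
    (hA : ∀ t, g'' t ≤ A * g t ^ (1 - c)) :
    g 1 ^ c ≤ g 0 ^ c + c * g 0 ^ (c - 1) * g' 0 + c * A / 2 := by
  set h'' : ℝ → ℝ := fun t =>
    g'' t * c * g t ^ (c - 1) + g' t * c * (g' t * (c - 1) * g t ^ (c - 1 - 1))
  have hh : ∀ t, HasDerivAt (fun t => g t ^ c) (g' t * c * g t ^ (c - 1)) t := fun t =>
    (hg t).rpow_const (Or.inl (hpos t).ne')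
  have hh' : ∀ t, HasDerivAt (fun t => g' t * c * g t ^ (c - 1)) (h'' t) t := fun t =>
    ((hg' t).mul_const c).fun_mul ((hg t).rpow_const (Or.inl (hpos t).ne'))
  have hbound : ∀ t, h'' t ≤ c * A := by
    intro t
    have hconcave : g' t * c * (g' t * (c - 1) * g t ^ (c - 1 - 1)) ≤ 0 := by
      have : 0 ≤ g t ^ (c - 1 - 1) := (Real.rpow_pos_of_pos (hpos t) _).le
      have : g' t * c * (g' t * (c - 1) * g t ^ (c - 1 - 1))
          = -(c * (1 - c) * (g' t ^ 2 * g t ^ (c - 1 - 1))) := by ring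
      rw [this, neg_nonpos]
      exact mul_nonneg (mul_nonneg hc0 (by linarith)) (by positivity)
    have hcancel : g t ^ (1 - c) * g t ^ (c - 1) = 1 := by
      rw [← Real.rpow_add (hpos t)]; simp
    have := (hpos t).le
    calc h'' t ≤ g'' t * c * g t ^ (c - 1) := by simp only [h'']; linarith
      _ ≤ A * g t ^ (1 - c) * c * g t ^ (c - 1) := by gcongr; exact hA t
      _ = c * A := by linear_combination (c * A) * hcancel
  have := le_add_deriv_mul_add_of_deriv2_le hh hh' hbound zero_lt_one
  simp only [sub_zero, mul_one, one_pow] at this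
  linarith

theorem hasDerivAt_sum_mul_pow_line {ι : Type*} [Fintype ι] (n : ℕ) (w x z : ι → ℝ) (t : ℝ) :
    HasDerivAt (fun t => ∑ j, w j * (x j + t * z j) ^ n)
      (n * ∑ j, w j * z j * (x j + t * z j) ^ (n - 1)) t := by
  have hline : ∀ j, HasDerivAt (fun t => x j + t * z j) (z j) t := fun j => by
    simpa using ((hasDerivAt_id t).mul_const (z j)).const_add (x j)
  refine (HasDerivAt.fun_sum fun j _ => ((hline j).fun_pow n).const_mul (w j)).congr_deriv ?_
  rw [mul_sum]
  exact sum_congr rfl fun j _ => by ring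

namespace Nemirovski

variable {ι : Type*} [Fintype ι] {m : ℕ}

-- `normSq m v = ‖v‖_{2m}²`, and `normSqGrad m v` is its gradient.
noncomputable def sumPow (m : ℕ) (v : ι → ℝ) : ℝ := ∑ j, v j ^ (2 * m)

noncomputable def normSq (m : ℕ) (v : ι → ℝ) : ℝ := sumPow m v ^ (m : ℝ)⁻¹

noncomputable def normSqGrad (m : ℕ) (v : ι → ℝ) (j : ι) : ℝ :=
  2 * sumPow m v ^ ((m : ℝ)⁻¹ - 1) * v j ^ (2 * m - 1)

theorem sumPow_nonneg (m : ℕ) (v : ι → ℝ) : 0 ≤ sumPow m v :=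
  sum_nonneg fun j _ => (even_two_mul m).pow_nonneg (v j)

theorem normSq_nonneg (m : ℕ) (v : ι → ℝ) : 0 ≤ normSq m v :=
  Real.rpow_nonneg (sumPow_nonneg m v) _

theorem pow_le_sumPow (m : ℕ) (v : ι → ℝ) (j : ι) : v j ^ (2 * m) ≤ sumPow m v :=
  single_le_sum (fun k _ => (even_two_mul m).pow_nonneg (v k)) (mem_univ j)

theorem eq_zero_of_sumPow_eq_zero (hm : m ≠ 0) {v : ι → ℝ} (h : sumPow m v = 0) (j : ι) :
    v j = 0 :=
  pow_eq_zero_iff (by omega) |>.1 <|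
    le_antisymm (h ▸ pow_le_sumPow m v j) ((even_two_mul m).pow_nonneg _)

theorem sq_le_normSq (hm : m ≠ 0) (v : ι → ℝ) (j : ι) : v j ^ 2 ≤ normSq m v := by
  rw [← Real.pow_rpow_inv_natCast (sq_nonneg (v j)) hm, ← pow_mul]
  exact Real.rpow_le_rpow ((even_two_mul m).pow_nonneg _) (pow_le_sumPow m v j) (by positivity)

theorem iSup_sq_le_normSq [Nonempty ι] (hm : m ≠ 0) (v : ι → ℝ) : ⨆ j, v j ^ 2 ≤ normSq m v :=
  ciSup_le (sq_le_normSq hm v)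

theorem normSq_smul (hm : m ≠ 0) (a : ℝ) (v : ι → ℝ) : normSq m (a • v) = a ^ 2 * normSq m v := by
  have hsum : sumPow m (a • v) = (a ^ 2) ^ m * sumPow m v := by
    simp [sumPow, mul_pow, ← pow_mul, mul_sum]
  rw [normSq, hsum, Real.mul_rpow (by positivity) (sumPow_nonneg m v),
    Real.pow_rpow_inv_natCast (sq_nonneg a) hm, normSq]

theorem normSq_le_of_sq_le (hm : m ≠ 0) {v : ι → ℝ} {r : ℝ} (hr : 0 ≤ r) (hv : ∀ j, v j ^ 2 ≤ r) :
    normSq m v ≤ (Fintype.card ι : ℝ) ^ (m : ℝ)⁻¹ * r := by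
  have hsum : sumPow m v ≤ Fintype.card ι * r ^ m := by
    calc sumPow m v ≤ ∑ _j : ι, r ^ m :=
          sum_le_sum fun j _ => pow_mul (v j) 2 m ▸ pow_le_pow_left₀ (sq_nonneg _) (hv j) m
      _ = Fintype.card ι * r ^ m := by simp
  calc normSq m v ≤ (Fintype.card ι * r ^ m) ^ (m : ℝ)⁻¹ :=
        Real.rpow_le_rpow (sumPow_nonneg m v) hsum (by positivity)
    _ = (Fintype.card ι : ℝ) ^ (m : ℝ)⁻¹ * r := by
        rw [Real.mul_rpow (by positivity) (by positivity), Real.pow_rpow_inv_natCast hr hm]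

theorem abs_normSqGrad_le (hm : m ≠ 0) (v : ι → ℝ) (j : ι) :
    |normSqGrad m v j| ≤ 2 * √(normSq m v) := by
  rcases (sumPow_nonneg m v).eq_or_lt with h0 | hpos
  · simp [normSqGrad, eq_zero_of_sumPow_eq_zero hm h0.symm j,
      zero_pow (show 2 * m - 1 ≠ 0 by omega)]
  · -- `r = ‖v‖_{2m}` bounds each `|v j|`, and the gradient is `2 r ^ (2 - 2m) v j ^ (2m - 1)`
    set r := sumPow m v ^ ((2 * m : ℕ) : ℝ)⁻¹ with hr
    have hvr : |v j| ≤ r := by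
      rw [← Real.pow_rpow_inv_natCast (abs_nonneg (v j)) (by omega : 2 * m ≠ 0)]
      exact Real.rpow_le_rpow (by positivity) ((even_two_mul m).pow_abs (v j) ▸ pow_le_sumPow m v j)
        (by positivity)
    have hsqrt : √(normSq m v) = r := by
      rw [Real.sqrt_eq_rpow, normSq, ← Real.rpow_mul hpos.le, hr]
      push_cast; ring_nf
    have hsum : sumPow m v ^ ((m : ℝ)⁻¹ - 1) * r ^ (2 * m - 1) = r := by
      rw [hr, ← Real.rpow_natCast, ← Real.rpow_mul hpos.le, ← Real.rpow_add hpos,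
        Nat.cast_sub (by omega)]
      congr 1
      field_simp
      push_cast
      ring
    rw [hsqrt, normSqGrad, abs_mul, abs_mul, abs_pow, abs_two,
      abs_of_nonneg (Real.rpow_nonneg hpos.le _), mul_assoc]
    gcongr
    calc sumPow m v ^ ((m : ℝ)⁻¹ - 1) * |v j| ^ (2 * m - 1)
        ≤ sumPow m v ^ ((m : ℝ)⁻¹ - 1) * r ^ (2 * m - 1) := by gcongr
      _ = r := hsum

theorem measurable_normSq (m : ℕ) : Measurable (normSq m : (ι → ℝ) → ℝ) := by
  unfold normSq sumPow; fun_prop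

theorem measurable_normSqGrad (m : ℕ) (j : ι) :
    Measurable (fun v : ι → ℝ => normSqGrad m v j) := by
  unfold normSqGrad sumPow; fun_prop

theorem sum_pow_mul_sq_le (hm : m ≠ 0) (a z : ι → ℝ) :
    ∑ j, a j ^ (2 * m - 2) * z j ^ 2 ≤ sumPow m a ^ (1 - (m : ℝ)⁻¹) * normSq m z := by
  obtain rfl | hm2 : m = 1 ∨ 2 ≤ m := by omega
  · simp [normSq, sumPow]
  have hm1 : (1 : ℝ) < m := by exact_mod_cast hm2
  have hconj : (m / (m - 1) : ℝ).HolderConjugate m :=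
    (Real.holderConjugate_iff.2 ⟨hm1, by field_simp; ring⟩).symm
  have hpow : ∀ b : ℝ, (b ^ (2 * m - 2)) ^ (m / (m - 1) : ℝ) = b ^ (2 * m) := fun b => by
    rw [show 2 * m - 2 = 2 * (m - 1) by omega, pow_mul, pow_mul, ← Real.rpow_natCast,
      ← Real.rpow_mul (sq_nonneg b), Nat.cast_sub (by omega), Nat.cast_one,
      show ((m : ℝ) - 1) * (m / (m - 1)) = m by field_simp [show (m : ℝ) - 1 ≠ 0 by linarith],
      Real.rpow_natCast]
  convert Real.inner_le_Lp_mul_Lq_of_nonneg univ hconj (f := fun j => a j ^ (2 * m - 2))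
    (g := fun j => z j ^ 2) (fun j _ => Even.pow_nonneg ⟨m - 1, by omega⟩ _)
    (fun j _ => sq_nonneg _) using 2
  · simp only [hpow, sumPow]
    congr 1
    field_simp
  · simp only [normSq, sumPow, ← Real.rpow_natCast, one_div]
    norm_cast
    simp [pow_mul]

theorem rpow_add_sumPow_add_le (hm : m ≠ 0) {δ : ℝ} (hδ : 0 < δ) (x z : ι → ℝ) :
    (δ + sumPow m (x + z)) ^ (m : ℝ)⁻¹ ≤ (δ + sumPow m x) ^ (m : ℝ)⁻¹
      + 2 * (δ + sumPow m x) ^ ((m : ℝ)⁻¹ - 1) * ∑ j, x j ^ (2 * m - 1) * z j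
      + (2 * m - 1) * normSq m z := by
  have hm1 : (1 : ℝ) ≤ m := by exact_mod_cast Nat.one_le_iff_ne_zero.2 hm
  set g : ℝ → ℝ := fun t => δ + sumPow m (x + t • z)
  have hg : ∀ t, HasDerivAt g (2 * m * ∑ j, z j * (x + t • z) j ^ (2 * m - 1)) t := fun t => by
    simpa [g, sumPow] using (hasDerivAt_sum_mul_pow_line (2 * m) 1 x z t).const_add δ
  have hg' : ∀ t, HasDerivAt (fun t => 2 * m * ∑ j, z j * (x + t • z) j ^ (2 * m - 1))
      (2 * m * (2 * m - 1) * ∑ j, (x + t • z) j ^ (2 * m - 2) * z j ^ 2) t := fun t => by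
    have := (hasDerivAt_sum_mul_pow_line (2 * m - 1) z x z t).const_mul (2 * m : ℝ)
    simp only [Pi.add_apply, Pi.smul_apply, smul_eq_mul]
    refine this.congr_deriv ?_
    rw [Nat.cast_sub (by omega), show 2 * m - 1 - 1 = 2 * m - 2 by omega]
    simp only [mul_sum]
    exact sum_congr rfl fun j _ => by push_cast; ring
  have hg_pos : ∀ t, 0 < g t := fun t => add_pos_of_pos_of_nonneg hδ (sumPow_nonneg m _)
  have hholder : ∀ t, 2 * m * (2 * m - 1) * ∑ j, (x + t • z) j ^ (2 * m - 2) * z j ^ 2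
      ≤ 2 * m * (2 * m - 1) * normSq m z * g t ^ (1 - (m : ℝ)⁻¹) := fun t => by
    have := sumPow_nonneg m (x + t • z)
    have := normSq_nonneg m z
    have : 0 ≤ 2 * (m : ℝ) * (2 * m - 1) := by nlinarith
    calc _ ≤ 2 * m * (2 * m - 1) * (sumPow m (x + t • z) ^ (1 - (m : ℝ)⁻¹) * normSq m z) := by
          gcongr; exact sum_pow_mul_sq_le hm _ z
      _ ≤ 2 * m * (2 * m - 1) * (g t ^ (1 - (m : ℝ)⁻¹) * normSq m z) := by
          gcongr
          · exact sub_nonneg.2 (inv_le_one_of_one_le₀ hm1)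
          · exact le_add_of_nonneg_left hδ.le
      _ = _ := by ring
  have key := rpow_le_add_of_deriv2_le_rpow (by positivity) (inv_le_one_of_one_le₀ hm1) hg_pos hg
    hg' hholder
  simp only [g, zero_smul, add_zero, one_smul, Pi.add_apply, Pi.zero_apply, mul_comm (z _)] at key
  have hmc : (m : ℝ) * (m : ℝ)⁻¹ = 1 := mul_inv_cancel₀ (by positivity)
  linear_combination key + (((δ + sumPow m x) ^ ((m : ℝ)⁻¹ - 1) * ∑ j, x j ^ (2 * m - 1) * z j) * 2
    + (2 * m - 1) * normSq m z) * hmc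

theorem normSq_add_le (hm : m ≠ 0) (x z : ι → ℝ) :
    normSq m (x + z) ≤ normSq m x + ∑ j, normSqGrad m x j * z j + (2 * m - 1) * normSq m z := by
  have hlim : ∀ a : ℝ, 0 ≤ a →
      Tendsto (fun δ : ℝ => (δ + a) ^ (m : ℝ)⁻¹) (𝓝[>] 0) (𝓝 (a ^ (m : ℝ)⁻¹)) := fun a ha => by
    have := ((continuous_add_const a).rpow_const
      (fun _ => Or.inr (by positivity : (0 : ℝ) ≤ (m : ℝ)⁻¹))).tendsto 0
    simpa using this.mono_left nhdsWithin_le_nhds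
  have hgrad : Tendsto (fun δ : ℝ => 2 * (δ + sumPow m x) ^ ((m : ℝ)⁻¹ - 1) *
      ∑ j, x j ^ (2 * m - 1) * z j) (𝓝[>] 0) (𝓝 (∑ j, normSqGrad m x j * z j)) := by
    rcases (sumPow_nonneg m x).eq_or_lt with h0 | hpos
    · simp [normSqGrad, eq_zero_of_sumPow_eq_zero hm h0.symm,
        zero_pow (show 2 * m - 1 ≠ 0 by omega)]
    · simp only [normSqGrad, mul_assoc, ← mul_sum]
      have := ((continuous_add_const (sumPow m x)).continuousAt (x := 0)).rpow_const
        (p := (m : ℝ)⁻¹ - 1) (Or.inl (by simpa using hpos.ne'))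
      simpa using ((this.tendsto.mono_left nhdsWithin_le_nhds).mul_const
        (∑ j, x j ^ (2 * m - 1) * z j)).const_mul 2
  exact le_of_tendsto_of_tendsto (hlim _ (sumPow_nonneg m _))
    (((hlim _ (sumPow_nonneg m _)).add hgrad).add_const _)
    (eventually_mem_nhdsWithin.mono fun δ hδ => rpow_add_sumPow_add_le hm hδ x z)

section Probability

variable {Ω : Type*} [MeasurableSpace Ω] {μ : Measure Ω}

theorem integrable_normSq (hm : m ≠ 0) {V : Ω → ι → ℝ} (hV : ∀ j, MemLp (fun ω => V ω j) 2 μ) :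
    Integrable (fun ω => normSq m (V ω)) μ := by
  have hVm : AEMeasurable V μ :=
    aemeasurable_pi_iff.2 fun j => (hV j).aestronglyMeasurable.aemeasurable
  refine ((integrable_finsetSum univ fun j _ => (hV j).integrable_sq).const_mul
    ((Fintype.card ι : ℝ) ^ (m : ℝ)⁻¹)).mono'
    ((measurable_normSq m).comp_aemeasurable hVm).aestronglyMeasurable
    (ae_of_all _ fun ω => ?_)
  rw [Real.norm_of_nonneg (normSq_nonneg m _)]
  exact normSq_le_of_sq_le hm (sum_nonneg fun j _ => sq_nonneg _)
    fun j => single_le_sum (f := fun k => V ω k ^ 2) (fun k _ => sq_nonneg _) (mem_univ j)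

theorem integrable_normSqGrad [IsFiniteMeasure μ] (hm : m ≠ 0) {V : Ω → ι → ℝ}
    (hV : ∀ j, MemLp (fun ω => V ω j) 2 μ) (j : ι) :
    Integrable (fun ω => normSqGrad m (V ω) j) μ := by
  have hVm : AEMeasurable V μ :=
    aemeasurable_pi_iff.2 fun j => (hV j).aestronglyMeasurable.aemeasurable
  refine ((integrable_const 1).add (integrable_normSq hm hV)).mono'
    ((measurable_normSqGrad m j).comp_aemeasurable hVm).aestronglyMeasurable
    (ae_of_all _ fun ω => ?_)
  have hsq := Real.sq_sqrt (normSq_nonneg m (V ω))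
  rw [Real.norm_eq_abs, Pi.add_apply]
  nlinarith [abs_normSqGrad_le hm (V ω) j, sq_nonneg (√(normSq m (V ω)) - 1)]

theorem integral_normSq_add_le [IsProbabilityMeasure μ] (hm : m ≠ 0) {S Z : Ω → ι → ℝ}
    (hindep : IndepFun S Z μ) (hS : ∀ j, MemLp (fun ω => S ω j) 2 μ)
    (hZ : ∀ j, MemLp (fun ω => Z ω j) 2 μ) (hmean : ∀ j, ∫ ω, Z ω j ∂μ = 0) :
    ∫ ω, normSq m (S ω + Z ω) ∂μ
      ≤ ∫ ω, normSq m (S ω) ∂μ + (2 * m - 1) * ∫ ω, normSq m (Z ω) ∂μ := by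
  have hindep_j : ∀ j, IndepFun (fun ω => normSqGrad m (S ω) j) (fun ω => Z ω j) μ := fun j =>
    hindep.comp (measurable_normSqGrad m j) (measurable_pi_apply j)
  have hcross : ∀ j, ∫ ω, normSqGrad m (S ω) j * Z ω j ∂μ = 0 := fun j =>
    ((hindep_j j).integral_mul_eq_mul_integral
      (integrable_normSqGrad hm hS j).aestronglyMeasurable
      (hZ j).aestronglyMeasurable).trans (by simp [hmean])
  have hcross_int : ∀ j, Integrable (fun ω => normSqGrad m (S ω) j * Z ω j) μ := fun j =>
    (hindep_j j).integrable_mul (integrable_normSqGrad hm hS j) ((hZ j).integrable one_le_two)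
  have hSint : Integrable (fun ω => normSq m (S ω)) μ := integrable_normSq hm hS
  have hZint : Integrable (fun ω => normSq m (Z ω)) μ := integrable_normSq hm hZ
  have hgrad : Integrable (fun ω => ∑ j, normSqGrad m (S ω) j * Z ω j) μ :=
    integrable_finsetSum _ fun j _ => hcross_int j
  have hfirst : Integrable (fun ω => normSq m (S ω) + ∑ j, normSqGrad m (S ω) j * Z ω j) μ :=
    hSint.add hgrad
  calc ∫ ω, normSq m (S ω + Z ω) ∂μ
      ≤ ∫ ω, (normSq m (S ω) + ∑ j, normSqGrad m (S ω) j * Z ω j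
          + (2 * m - 1) * normSq m (Z ω)) ∂μ :=
        integral_mono (integrable_normSq hm fun j => (hS j).add (hZ j))
          (hfirst.add (hZint.const_mul _)) fun ω => normSq_add_le hm (S ω) (Z ω)
    _ = ∫ ω, normSq m (S ω) ∂μ + (2 * m - 1) * ∫ ω, normSq m (Z ω) ∂μ := by
        rw [integral_add hfirst (hZint.const_mul _), integral_add hSint hgrad,
          integral_finsetSum _ fun j _ => hcross_int j, integral_const_mul]
        simp [hcross]

theorem integral_normSq_sum_le [IsProbabilityMeasure μ] (hm : m ≠ 0) {κ : Type*}
    {Z : κ → Ω → ι → ℝ} (hindep : iIndepFun Z μ) (hmeas : ∀ i, Measurable (Z i))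
    (hL2 : ∀ i j, MemLp (fun ω => Z i ω j) 2 μ) (hmean : ∀ i j, ∫ ω, Z i ω j ∂μ = 0)
    (s : Finset κ) :
    ∫ ω, normSq m (∑ i ∈ s, Z i ω) ∂μ ≤ (2 * m - 1) * ∑ i ∈ s, ∫ ω, normSq m (Z i ω) ∂μ := by
  induction s using Finset.cons_induction with
  | empty =>
    simp [normSq, sumPow, zero_pow (show 2 * m ≠ 0 by omega),
      Real.zero_rpow (inv_ne_zero (Nat.cast_ne_zero.2 hm))]
  | cons i s hi ih =>
    have hindepS : IndepFun (fun ω => ∑ k ∈ s, Z k ω) (Z i) μ :=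
      (funext fun ω => Finset.sum_apply ω s Z : ∑ k ∈ s, Z k = _) ▸
        hindep.indepFun_finsetSum_of_notMem hmeas hi
    have hL2sum : ∀ j, MemLp (fun ω => (∑ k ∈ s, Z k ω) j) 2 μ := fun j => by
      simpa only [Finset.sum_apply] using memLp_finsetSum s fun k _ => hL2 k j
    have := integral_normSq_add_le hm hindepS hL2sum (hL2 i) (hmean i)
    simp only [sum_cons, add_comm (Z i _)]
    linarith

theorem integral_normSq_smul_le (hm : m ≠ 0) {a : Ω → ℝ} {V : Ω → ι → ℝ} {C : ℝ}
    (ha : MemLp a 2 μ) (hV : ∀ᵐ ω ∂μ, ∀ j, |V ω j| ≤ C) :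
    ∫ ω, normSq m (a ω • V ω) ∂μ ≤ (Fintype.card ι : ℝ) ^ (m : ℝ)⁻¹ * C ^ 2 * ∫ ω, a ω ^ 2 ∂μ := by
  rw [← integral_const_mul]
  refine integral_mono_of_nonneg (ae_of_all _ fun ω => normSq_nonneg _ _)
    (ha.integrable_sq.const_mul _) ?_
  filter_upwards [hV] with ω hω
  rw [normSq_smul hm]
  have := normSq_le_of_sq_le hm (sq_nonneg C) fun j => sq_le_sq.2 ((hω j).trans (le_abs_self C))
  nlinarith [sq_nonneg (a ω)]

end Probability

theorem two_mul_ceil_log_sub_one_mul_rpow_le {p : ℕ} (hp : 0 < p) :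
    (2 * ⌈Real.log (2 * p)⌉₊ - 1) * (p : ℝ) ^ (⌈Real.log (2 * p)⌉₊ : ℝ)⁻¹
      ≤ 8 * Real.log (2 * p) := by
  set L := Real.log (2 * p)
  have hp1 : (1 : ℝ) ≤ p := by exact_mod_cast hp
  have hL : 0 < L := Real.log_pos (by linarith)
  set m := ⌈L⌉₊
  have hm : (0 : ℝ) < m := by exact_mod_cast Nat.ceil_pos.2 hL
  have hLm : L ≤ m := Nat.le_ceil L
  have hpe : (p : ℝ) ^ (m : ℝ)⁻¹ ≤ Real.exp 1 := by
    calc (p : ℝ) ^ (m : ℝ)⁻¹ ≤ (2 * p : ℝ) ^ (m : ℝ)⁻¹ := by gcongr; linarith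
      _ = Real.exp (L / m) := by rw [Real.rpow_def_of_pos (by linarith), div_eq_mul_inv]
      _ ≤ Real.exp 1 := Real.exp_le_exp.2 ((div_le_one hm).2 hLm)
  have hlog2 := Real.log_two_gt_d9
  obtain rfl | hp2 : p = 1 ∨ 2 ≤ p := by omega
  · have hm1 : m = 1 := by
      refine le_antisymm (Nat.ceil_le.2 ?_) (Nat.one_le_iff_ne_zero.2 (by positivity))
      simpa [L] using Real.log_two_lt_d9.le.trans (by norm_num)
    simp only [hm1, Nat.cast_one, inv_one, Real.rpow_one, L, mul_one]
    linarith
  · have hL4 : 2 * Real.log 2 ≤ L := by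
      rw [← Real.log_rpow two_pos]
      exact Real.log_le_log (by norm_num) (by norm_num; exact_mod_cast (by omega : 4 ≤ 2 * p))
    have hmL : (m : ℝ) < L + 1 := Nat.ceil_lt_add_one hL.le
    have he := Real.exp_one_lt_d9
    calc (2 * m - 1) * (p : ℝ) ^ (m : ℝ)⁻¹ ≤ (2 * L + 1) * Real.exp 1 := by
          gcongr
          linarith
      _ ≤ 8 * L := by nlinarith

end Nemirovski

open Nemirovski

theorem nemirovski_moment_bound_general
    {Ω : Type*} [MeasurableSpace Ω] (μ : Measure Ω) [IsProbabilityMeasure μ]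
    (n p : ℕ) (hp : 0 < p)
    (ε : Fin n → Ω → ℝ) (X : Fin n → Fin p → Ω → ℝ)
    (hεmeas : ∀ i, Measurable (ε i)) (hXmeas : ∀ i j, Measurable (X i j))
    -- i.i.d. rows
    (hindep : iIndepFun
      (fun i ω => (ε i ω, fun j => X i j ω)) μ)
    (C₂ C₆ : ℝ)
    (hbdd : ∀ i j, ∀ᵐ ω ∂μ, |X i j ω| ≤ C₂)
    (hε2 : ∀ i, MemLp (ε i) 2 μ)
    (hmom : ∀ i, ∫ ω, (ε i ω) ^ 2 ∂μ ≤ C₆)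
    (horth : ∀ i j, ∫ ω, ε i ω * X i j ω ∂μ = 0) :
    ∫ ω, (⨆ j : Fin p, |(n : ℝ)⁻¹ * ∑ i, ε i ω * X i j ω| ^ 2) ∂μ ≤
      8 * Real.log (2 * p) * C₂ ^ 2 * C₆ / n := by
  have : Nonempty (Fin p) := Fin.pos_iff_nonempty.1 hp
  set m := ⌈Real.log (2 * p)⌉₊
  have hL : 0 < Real.log (2 * p) := Real.log_pos (by norm_cast; omega)
  have hm : m ≠ 0 := (Nat.ceil_pos.2 hL).ne'
  set Z : Fin n → Ω → Fin p → ℝ := fun i ω => ε i ω • fun j => X i j ω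
  have hZL2 : ∀ i j, MemLp (fun ω => Z i ω j) 2 μ := fun i j =>
    (memLp_top_of_bound (hXmeas i j).aestronglyMeasurable C₂ (hbdd i j)).mul' (hε2 i)
  have hSL2 : ∀ j, MemLp (fun ω => (∑ i, Z i ω) j) 2 μ := fun j => by
    simpa [Finset.sum_apply] using memLp_finsetSum univ fun i _ => hZL2 i j
  have hmax : ∀ ω, ⨆ j : Fin p, |(n : ℝ)⁻¹ * ∑ i, ε i ω * X i j ω| ^ 2
      ≤ (n : ℝ)⁻¹ ^ 2 * normSq m (∑ i, Z i ω) := fun ω => by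
    rw [← normSq_smul hm]
    simp only [sq_abs]
    simpa [Z] using iSup_sq_le_normSq hm ((n : ℝ)⁻¹ • ∑ i, Z i ω)
  have hm1 : (1 : ℝ) ≤ m := by exact_mod_cast Nat.one_le_iff_ne_zero.2 hm
  calc ∫ ω, (⨆ j : Fin p, |(n : ℝ)⁻¹ * ∑ i, ε i ω * X i j ω| ^ 2) ∂μ
      ≤ (n : ℝ)⁻¹ ^ 2 * ∫ ω, normSq m (∑ i, Z i ω) ∂μ := by
        rw [← integral_const_mul]
        exact integral_mono_of_nonneg (ae_of_all _ fun ω => Real.iSup_nonneg fun j => by positivity)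
          ((integrable_normSq hm hSL2).const_mul _) (ae_of_all _ hmax)
    _ ≤ (n : ℝ)⁻¹ ^ 2 * ((2 * m - 1) * ∑ i, ∫ ω, normSq m (Z i ω) ∂μ) := by
        gcongr
        exact integral_normSq_sum_le hm (hindep.comp (fun _ v => v.1 • v.2) fun _ => by fun_prop)
          (fun i => by fun_prop) hZL2 horth univ
    _ ≤ (n : ℝ)⁻¹ ^ 2 * ((2 * m - 1) * ∑ i, (p : ℝ) ^ (m : ℝ)⁻¹ * C₂ ^ 2 * ∫ ω, ε i ω ^ 2 ∂μ) := by
        gcongr with i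
        · linarith
        · simpa using integral_normSq_smul_le hm (hε2 i) (ae_all_iff.2 (hbdd i))
    _ = (n : ℝ)⁻¹ ^ 2 * ((2 * m - 1) * (p : ℝ) ^ (m : ℝ)⁻¹ * C₂ ^ 2 * ∑ i, ∫ ω, ε i ω ^ 2 ∂μ) := by
        rw [← mul_sum]; ring
    _ ≤ (n : ℝ)⁻¹ ^ 2 * (8 * Real.log (2 * p) * C₂ ^ 2 * (n * C₆)) := by
        have := two_mul_ceil_log_sub_one_mul_rpow_le hp
        have : 0 ≤ ∑ i, ∫ ω, ε i ω ^ 2 ∂μ :=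
          sum_nonneg fun i _ => integral_nonneg fun ω => sq_nonneg _
        gcongr
        simpa using sum_le_sum fun i (_ : i ∈ univ) => hmom i
    _ = 8 * Real.log (2 * p) * C₂ ^ 2 * C₆ / n := by
        have hn : (n : ℝ)⁻¹ ^ 2 * n = (n : ℝ)⁻¹ := by simpa [sq] using mul_self_mul_inv ((n : ℝ)⁻¹)
        linear_combination (8 * Real.log (2 * p) * C₂ ^ 2 * C₆) * hn

/-- Nemirovski moment bound (Lemma 1 of the paper):
`E[max_j |n⁻¹ ∑ᵢ εᵢ Xᵢⱼ|²] ≤ 8 log(2p) C₂² C₆ / n`. -/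
theorem nemirovski_moment_bound
    {Ω : Type*} [MeasurableSpace Ω] (μ : Measure Ω) [IsProbabilityMeasure μ]
    (n p : ℕ) (hn : 0 < n) (hp : 0 < p)
    (ε : Fin n → Ω → ℝ) (X : Fin n → Fin p → Ω → ℝ)
    (hεmeas : ∀ i, Measurable (ε i)) (hXmeas : ∀ i j, Measurable (X i j))
    -- i.i.d. rows
    (hindep : iIndepFun
      (fun i ω => (ε i ω, fun j => X i j ω)) μ)
    (hident : ∀ i i' : Fin n,
      Measure.map (fun ω => (ε i ω, fun j => X i j ω)) μ =
        Measure.map (fun ω => (ε i' ω, fun j => X i' j ω)) μ)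
    (C₂ C₆ : ℝ)
    (hbdd : ∀ i j, ∀ᵐ ω ∂μ, |X i j ω| ≤ C₂)
    (hε2 : ∀ i, MemLp (ε i) 2 μ)
    (hmom : ∀ i, ∫ ω, (ε i ω) ^ 2 ∂μ ≤ C₆)
    (horth : ∀ i j, ∫ ω, ε i ω * X i j ω ∂μ = 0) :
    ∫ ω, (⨆ j : Fin p, |(n : ℝ)⁻¹ * ∑ i, ε i ω * X i j ω| ^ 2) ∂μ ≤
      8 * Real.log (2 * p) * C₂ ^ 2 * C₆ / n :=
  nemirovski_moment_bound_general μ n p hp ε X hεmeas hXmeas hindep C₂ C₆ hbdd hε2 hmom horth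
end
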